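/- arXiv:2302.07603 — 2 statements merged into one kernel-verified Lean document; each statement's English description precedes it below -/
import Mathlib

section
/- Let A be a real symmetric positive definite n×n matrix, T > 0, M ≥ 1 an integer, τ = T/M, and let G = (I + (τ/2)A)^{-1}(I − (τ/2)A), so that ‖G‖ < 1. Let f : [0,T] → ℝⁿ be continuous, φ ∈ ℝⁿ, and for each α ∈ ℝⁿ let v^M(α) ∈ ℝⁿ denote the final Crank–Nicholson iterate defined by v⁰(α) = α and v^{m+1}(α) = G v^m(α) + τ (I + (τ/2)A)^{-1} f(t_m + τ/2) for m = 0,…,M−1, where t_m = mτ. Let v₀ ∈ ℝⁿ satisfy v₀ = v(T; v₀) − φ, where v(·; v₀) is the solution of the initial value problem v' + A v = f, v(0) = v₀. Assume there is a constant C ≥ 0 such that the Crank–Nicholson global error bound ‖v(T; v₀) − v^M(v₀)‖ ≤ C τ² holds. Then the shooting iterates α_{k+1} = v^M(α_k) − φ (k = 0,1,2,…) satisfy ‖α_{k+1} − v₀‖ ≤ ‖G‖^M ‖α_k − v₀‖ + C τ² (1 + ‖G‖^M)(1 − ‖G‖^M)^{-1} for every k ≥ 0. -/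
/-- The continuous linear map on Euclidean spaces induced by a real matrix.
`‖matCLM B‖` is the operator 2-norm (spectral norm) of `B`. -/
noncomputable def matCLM {m n : ℕ} (B : Matrix (Fin m) (Fin n) ℝ) :
    EuclideanSpace ℝ (Fin n) →L[ℝ] EuclideanSpace ℝ (Fin m) :=
  LinearMap.toContinuousLinearMap (Matrix.toEuclideanLin B)

/-! The shooting map `α ↦ v^M(α) - φ` is affine with linear part `G^M`, so it is a contraction
with constant `‖G‖^M` and the shooting error contracts up to the time-discretization error
`‖v(T; v₀) - v^M(v₀)‖ ≤ C τ²`, by the fixed-point property `v₀ = v(T; v₀) - φ`. -/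

theorem norm_sub_le_opNorm_pow_mul_of_affine_recursion {𝕜 E : Type*} [NontriviallyNormedField 𝕜]
    [SeminormedAddCommGroup E] [NormedSpace 𝕜 E] (L : E →L[𝕜] E) (c : ℕ → E) (w : E → ℕ → E)
    (hw0 : ∀ a, w a 0 = a) (hwrec : ∀ a m, w a (m + 1) = L (w a m) + c m) (a b : E) (m : ℕ) :
    ‖w a m - w b m‖ ≤ ‖L‖ ^ m * ‖a - b‖ := by
  induction m with
  | zero => simp [hw0]
  | succ m ih =>
    calc ‖w a (m + 1) - w b (m + 1)‖ = ‖L (w a m - w b m)‖ := by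
          rw [hwrec, hwrec, map_sub, add_sub_add_right_eq_sub]
      _ ≤ ‖L‖ * ‖w a m - w b m‖ := L.le_opNorm _
      _ ≤ ‖L‖ * (‖L‖ ^ m * ‖a - b‖) := by gcongr
      _ = ‖L‖ ^ (m + 1) * ‖a - b‖ := by ring

theorem le_mul_one_add_mul_inv_one_sub {ε g : ℝ} (hε : 0 ≤ ε) (hg0 : 0 ≤ g) (hg1 : g < 1) :
    ε ≤ ε * (1 + g) * (1 - g)⁻¹ := by
  rw [mul_assoc, ← div_eq_mul_inv]
  refine le_mul_of_one_le_right hε ?_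
  rw [one_le_div (by linarith)]
  linarith

theorem stmt8_general {n : ℕ} (A : Matrix (Fin n) (Fin n) ℝ)
    (T : ℝ) (M : ℕ) (hM : 1 ≤ M) (τ : ℝ)
    (G : Matrix (Fin n) (Fin n) ℝ)
    (hG : ‖matCLM G‖ < 1)
    (f : ℝ → EuclideanSpace ℝ (Fin n))
    (φ : EuclideanSpace ℝ (Fin n))
    -- `w α m` is the `m`-th Crank–Nicholson iterate `v^m(α)` with initial data `α`
    (w : EuclideanSpace ℝ (Fin n) → ℕ → EuclideanSpace ℝ (Fin n))
    (hw0 : ∀ α, w α 0 = α)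
    (hwrec : ∀ α m, w α (m + 1) = matCLM G (w α m)
      + τ • matCLM (1 + (τ / 2) • A)⁻¹ (f ((m : ℝ) * τ + τ / 2)))
    -- `vsol` is the solution of the IVP `v' + A v = f`, `v(0) = v₀`
    (v0 : EuclideanSpace ℝ (Fin n)) (vsol : ℝ → EuclideanSpace ℝ (Fin n))
    (hfix : v0 = vsol T - φ)
    -- Crank–Nicholson global error bound
    (C : ℝ) (hC : 0 ≤ C) (herr : ‖vsol T - w v0 M‖ ≤ C * τ ^ 2)
    -- shooting iterates
    (α : ℕ → EuclideanSpace ℝ (Fin n))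
    (hα : ∀ k, α (k + 1) = w (α k) M - φ) :
    ∀ k, ‖α (k + 1) - v0‖ ≤ ‖matCLM G‖ ^ M * ‖α k - v0‖
      + C * τ ^ 2 * (1 + ‖matCLM G‖ ^ M) * (1 - ‖matCLM G‖ ^ M)⁻¹ := by
  intro k
  have hGM : ‖matCLM G‖ ^ M < 1 := pow_lt_one₀ (norm_nonneg _) hG (by omega)
  have hstable := norm_sub_le_opNorm_pow_mul_of_affine_recursion (matCLM G) _ w hw0 hwrec
  calc ‖α (k + 1) - v0‖ = ‖(w (α k) M - w v0 M) + (w v0 M - vsol T)‖ := by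
        rw [hα, hfix]; congr 1; abel
    _ ≤ ‖matCLM G‖ ^ M * ‖α k - v0‖ + C * τ ^ 2 :=
        norm_add_le_of_le (hstable _ _ M) (by rwa [norm_sub_rev])
    _ ≤ _ := add_le_add_right (le_mul_one_add_mul_inv_one_sub (mul_nonneg hC (sq_nonneg τ))
        (pow_nonneg (norm_nonneg _) M) hGM) _

/-- convergence estimate for the shooting method combined with the
Crank–Nicholson time discretization. -/
theorem stmt8 {n : ℕ} (A : Matrix (Fin n) (Fin n) ℝ) (hA : A.PosDef)
    (T : ℝ) (hT : 0 < T) (M : ℕ) (hM : 1 ≤ M) (τ : ℝ) (hτ : τ = T / M)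
    (G : Matrix (Fin n) (Fin n) ℝ)
    (hGdef : G = (1 + (τ / 2) • A)⁻¹ * (1 - (τ / 2) • A))
    (hG : ‖matCLM G‖ < 1)
    (f : ℝ → EuclideanSpace ℝ (Fin n)) (hf : ContinuousOn f (Set.Icc 0 T))
    (φ : EuclideanSpace ℝ (Fin n))
    -- `w α m` is the `m`-th Crank–Nicholson iterate `v^m(α)` with initial data `α`
    (w : EuclideanSpace ℝ (Fin n) → ℕ → EuclideanSpace ℝ (Fin n))
    (hw0 : ∀ α, w α 0 = α)
    (hwrec : ∀ α m, w α (m + 1) = matCLM G (w α m)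
      + τ • matCLM (1 + (τ / 2) • A)⁻¹ (f ((m : ℝ) * τ + τ / 2)))
    -- `vsol` is the solution of the IVP `v' + A v = f`, `v(0) = v₀`
    (v0 : EuclideanSpace ℝ (Fin n)) (vsol : ℝ → EuclideanSpace ℝ (Fin n))
    (hsol : ∀ t ∈ Set.Ioo (0 : ℝ) T, HasDerivAt vsol (f t - matCLM A (vsol t)) t)
    (hsol0 : vsol 0 = v0)
    (hfix : v0 = vsol T - φ)
    -- Crank–Nicholson global error bound
    (C : ℝ) (hC : 0 ≤ C) (herr : ‖vsol T - w v0 M‖ ≤ C * τ ^ 2)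
    -- shooting iterates
    (α : ℕ → EuclideanSpace ℝ (Fin n))
    (hα : ∀ k, α (k + 1) = w (α k) M - φ) :
    ∀ k, ‖α (k + 1) - v0‖ ≤ ‖matCLM G‖ ^ M * ‖α k - v0‖
      + C * τ ^ 2 * (1 + ‖matCLM G‖ ^ M) * (1 - ‖matCLM G‖ ^ M)⁻¹ :=
  stmt8_general A T M hM τ G hG f φ w hw0 hwrec v0 vsol hfix C hC herr α hα
end

section
/- Let A be a real symmetric positive definite n×n matrix with smallest eigenvalue λ₁ > 0 and spectral radius ρ > 0, let T > 0, 0 < ε < T, k ≥ 1, and let Q ∈ ℝ^{n×k}, H ∈ ℝ^{k×k}. Let f : [0,T] → ℝⁿ be continuous with S := sup_{0 ≤ s ≤ T} ‖f(s)‖ < ∞, and φ ∈ ℝⁿ. Assume: (i) the Arnoldi approximation bound ‖e^{-t A} b − Q e^{-t H} Q^* b‖ ≤ 10 e^{-4k²/(5Tρ)} ‖b‖ holds for every b ∈ ℝⁿ and every t ∈ [ε, T]; (ii) the crude bound ‖e^{-t A} b − Q e^{-t H} Q^* b‖ ≤ (1 + ‖Q‖ ‖Q^*‖) ‖b‖ holds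 for every b ∈ ℝⁿ and t ∈ [0, ε]; (iii) C := e^{-T λ₁} + 10 e^{-4k²/(5Tρ)} < 1. Let v₀ ∈ ℝⁿ satisfy v₀ = e^{-T A} v₀ + ∫₀^T e^{-(T−s)A} f(s) ds − φ, and define the Arnoldi fixed-point iterates α_n = Q e^{-T H} Q^* α_{n−1} + ∫₀^T Q e^{-(T−s) H} Q^* f(s) ds − φ for n ≥ 1 starting from α₀ ∈ ℝⁿ. Then for every n ≥ 1, ‖α_n − v₀‖ ≤ e^{-T n λ₁} ‖α₀ − v₀‖ + 10 e^{-4k²/(5Tρ)} n C^{n−1} ‖α₀ − v₀‖ + ( 10 e^{-4k²/(5Tρ)} (‖v₀‖ + T S) + ε (1 + ‖Q‖ ‖Q^*‖) S ) (1 − Cⁿ)/(1 − C). -/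
open scoped Matrix

lemma matCLM_eq {n : ℕ} (B : Matrix (Fin n) (Fin n) ℝ) :
    matCLM B = Matrix.toEuclideanCLM (𝕜 := ℝ) B := rfl

lemma matCLM_mul {n : ℕ} (X Y : Matrix (Fin n) (Fin n) ℝ) (x : EuclideanSpace ℝ (Fin n)) :
    matCLM (X * Y) x = matCLM X (matCLM Y x) := by
  simp [matCLM_eq, map_mul]

lemma matCLM_apply {n : ℕ} (B : Matrix (Fin n) (Fin n) ℝ) (x : EuclideanSpace ℝ (Fin n)) (i : Fin n) :
    matCLM B x i = B.mulVec (fun j => x j) i := rfl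

lemma matCLM_one {n : ℕ} (x : EuclideanSpace ℝ (Fin n)) : matCLM 1 x = x := by
  simp [matCLM_eq]

lemma matCLM_cont {n : ℕ} : Continuous (fun B : Matrix (Fin n) (Fin n) ℝ => matCLM B) := by
  have h := LinearMap.continuous_of_finiteDimensional
    ((Matrix.toEuclideanLin.trans LinearMap.toContinuousLinearMap).toLinearMap
      : Matrix (Fin n) (Fin n) ℝ →ₗ[ℝ] (EuclideanSpace ℝ (Fin n) →L[ℝ] EuclideanSpace ℝ (Fin n)))
  exact h

lemma exp_cont {n : ℕ} (A : Matrix (Fin n) (Fin n) ℝ) (T : ℝ) :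
    Continuous (fun s : ℝ => NormedSpace.exp (-((T - s) • A))) := by
  letI : SeminormedRing (Matrix (Fin n) (Fin n) ℝ) := Matrix.linftyOpSemiNormedRing
  letI : NormedRing (Matrix (Fin n) (Fin n) ℝ) := Matrix.linftyOpNormedRing
  letI : NormedAlgebra ℝ (Matrix (Fin n) (Fin n) ℝ) := Matrix.linftyOpNormedAlgebra
  letI : NormedAlgebra ℚ (Matrix (Fin n) (Fin n) ℝ) := NormedAlgebra.restrictScalars ℚ ℝ _
  exact NormedSpace.exp_continuous.comp (by fun_prop)

lemma matCLM_unitary_norm {n : ℕ} {U : Matrix (Fin n) (Fin n) ℝ}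
    (hU : U ∈ Matrix.unitaryGroup (Fin n) ℝ) (x : EuclideanSpace ℝ (Fin n)) :
    ‖matCLM U x‖ = ‖x‖ := by
  have hadj : matCLM (star U) = ContinuousLinearMap.adjoint (matCLM U) := by
    rw [matCLM_eq, matCLM_eq, map_star, ContinuousLinearMap.star_eq_adjoint]
  have h1 : matCLM (star U) (matCLM U x) = x := by
    rw [← matCLM_mul, (Matrix.mem_unitaryGroup_iff'.mp hU : star U * U = 1), matCLM_one]
  have h2 : ‖matCLM U x‖ ^ 2 = ‖x‖ ^ 2 := by
    rw [← real_inner_self_eq_norm_sq, ← real_inner_self_eq_norm_sq]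
    calc inner ℝ (matCLM U x) (matCLM U x)
        = inner ℝ (ContinuousLinearMap.adjoint (matCLM U) (matCLM U x)) x := by
          rw [ContinuousLinearMap.adjoint_inner_left]
      _ = (inner ℝ x x : ℝ) := by rw [← hadj, h1]
  have := congrArg Real.sqrt h2
  simpa [Real.sqrt_sq, norm_nonneg] using this

lemma matCLM_diag_bound {n : ℕ} (d : Fin n → ℝ) (c : ℝ) (hc : 0 ≤ c)
    (h : ∀ i, |d i| ≤ c) (x : EuclideanSpace ℝ (Fin n)) :
    ‖matCLM (Matrix.diagonal d) x‖ ≤ c * ‖x‖ := by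
  rw [EuclideanSpace.norm_eq, EuclideanSpace.norm_eq, ← Real.sqrt_sq hc,
    ← Real.sqrt_mul (by positivity)]
  apply Real.sqrt_le_sqrt
  rw [Finset.mul_sum]
  apply Finset.sum_le_sum
  intro i _
  have hdi : matCLM (Matrix.diagonal d) x i = d i * x i := by
    rw [matCLM_apply, Matrix.mulVec_diagonal]
  rw [hdi]
  have h1 : ‖d i * x i‖ ≤ c * ‖x i‖ := by
    rw [norm_mul]
    exact mul_le_mul_of_nonneg_right (by simpa using h i) (norm_nonneg _)
  calc ‖d i * x i‖ ^ 2 ≤ (c * ‖x i‖) ^ 2 := by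
        apply pow_le_pow_left₀ (norm_nonneg _) h1
    _ = c ^ 2 * ‖x i‖ ^ 2 := by ring

lemma exp_opBound {n : ℕ} (A : Matrix (Fin n) (Fin n) ℝ) (hA : A.IsHermitian)
    (lam1 t : ℝ) (ht : 0 ≤ t) (hmin : ∀ i, lam1 ≤ hA.eigenvalues i)
    (b : EuclideanSpace ℝ (Fin n)) :
    ‖matCLM (NormedSpace.exp (-(t • A))) b‖ ≤ Real.exp (-(t * lam1)) * ‖b‖ := by
  classical
  have hUmem : (Matrix.IsHermitian.eigenvectorUnitary hA : Matrix (Fin n) (Fin n) ℝ)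
      ∈ Matrix.unitaryGroup (Fin n) ℝ := (Matrix.IsHermitian.eigenvectorUnitary hA).2
  have hUstar : (Matrix.IsHermitian.eigenvectorUnitary hA : Matrix (Fin n) (Fin n) ℝ)
      * star (Matrix.IsHermitian.eigenvectorUnitary hA : Matrix (Fin n) (Fin n) ℝ) = 1 :=
    Matrix.mem_unitaryGroup_iff.mp hUmem
  have hstarU : star (Matrix.IsHermitian.eigenvectorUnitary hA : Matrix (Fin n) (Fin n) ℝ)
      * (Matrix.IsHermitian.eigenvectorUnitary hA : Matrix (Fin n) (Fin n) ℝ) = 1 :=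
    Matrix.mem_unitaryGroup_iff'.mp hUmem
  have hUnit : IsUnit (Matrix.IsHermitian.eigenvectorUnitary hA : Matrix (Fin n) (Fin n) ℝ) :=
    ⟨⟨_, _, hUstar, hstarU⟩, rfl⟩
  have hUinv : (Matrix.IsHermitian.eigenvectorUnitary hA : Matrix (Fin n) (Fin n) ℝ)⁻¹
      = star (Matrix.IsHermitian.eigenvectorUnitary hA : Matrix (Fin n) (Fin n) ℝ) :=
    Matrix.inv_eq_right_inv hUstar
  have hspec : -(t • A) = (Matrix.IsHermitian.eigenvectorUnitary hA : Matrix (Fin n) (Fin n) ℝ)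
      * Matrix.diagonal (fun i => -(t * hA.eigenvalues i))
      * (Matrix.IsHermitian.eigenvectorUnitary hA : Matrix (Fin n) (Fin n) ℝ)⁻¹ := by
    rw [hUinv]
    conv_lhs => rw [Matrix.IsHermitian.spectral_theorem hA]
    rw [show (Matrix.diagonal (fun i => -(t * hA.eigenvalues i)) : Matrix (Fin n) (Fin n) ℝ)
        = -(t • Matrix.diagonal (RCLike.ofReal ∘ hA.eigenvalues)) from by
      rw [← Matrix.diagonal_smul, ← Matrix.diagonal_neg]
      congr 1]
    rw [mul_neg, neg_mul, mul_smul_comm, smul_mul_assoc]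
    rw [Unitary.conjStarAlgAut_apply]
  rw [hspec, Matrix.exp_conj _ _ hUnit, Matrix.exp_diagonal, hUinv]
  have hstarmem : star (Matrix.IsHermitian.eigenvectorUnitary hA : Matrix (Fin n) (Fin n) ℝ)
      ∈ Matrix.unitaryGroup (Fin n) ℝ := Unitary.star_mem hUmem
  rw [matCLM_mul, matCLM_mul, matCLM_unitary_norm hUmem, ← matCLM_unitary_norm hstarmem b]
  apply matCLM_diag_bound _ _ (Real.exp_nonneg _)
  intro i
  have hexpi : NormedSpace.exp (fun j => -(t * hA.eigenvalues j)) i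
      = Real.exp (-(t * hA.eigenvalues i)) := by
    rw [Pi.coe_exp, Real.exp_eq_exp_ℝ]
  rw [hexpi, abs_of_nonneg (Real.exp_nonneg _)]
  exact Real.exp_le_exp.mpr (by nlinarith [hmin i])

/-- error estimate for the hybrid shooting–Arnoldi fixed-point
iteration (Lemma 2 of the paper). -/
theorem stmt10 {n k : ℕ} (A : Matrix (Fin n) (Fin n) ℝ) (hA : A.PosDef)
    (lam1 : ℝ) (hlam_pos : 0 < lam1)
    (hlam_mem : ∃ i, hA.isHermitian.eigenvalues i = lam1)
    (hlam_min : ∀ i, lam1 ≤ hA.isHermitian.eigenvalues i)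
    (ρ : ℝ) (hρ_pos : 0 < ρ)
    (hρ_mem : ∃ i, |hA.isHermitian.eigenvalues i| = ρ)
    (hρ_max : ∀ i, |hA.isHermitian.eigenvalues i| ≤ ρ)
    (T ε : ℝ) (hT : 0 < T) (hε0 : 0 < ε) (hεT : ε < T) (hk : 1 ≤ k)
    (Q : Matrix (Fin n) (Fin k) ℝ) (H : Matrix (Fin k) (Fin k) ℝ)
    (f : ℝ → EuclideanSpace ℝ (Fin n)) (hf : ContinuousOn f (Set.Icc 0 T))
    (S : ℝ) (hS : S = sSup ((fun s => ‖f s‖) '' Set.Icc (0 : ℝ) T))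
    (φ : EuclideanSpace ℝ (Fin n))
    -- (i) Arnoldi approximation bound on [ε, T]
    (harn : ∀ (b : EuclideanSpace ℝ (Fin n)), ∀ t ∈ Set.Icc ε T,
      ‖matCLM (NormedSpace.exp (-(t • A))) b
          - matCLM (Q * NormedSpace.exp (-(t • H)) * Qᵀ) b‖
        ≤ 10 * Real.exp (-(4 * (k : ℝ) ^ 2 / (5 * T * ρ))) * ‖b‖)
    -- (ii) crude bound on [0, ε]
    (hcrude : ∀ (b : EuclideanSpace ℝ (Fin n)), ∀ t ∈ Set.Icc (0 : ℝ) ε,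
      ‖matCLM (NormedSpace.exp (-(t • A))) b
          - matCLM (Q * NormedSpace.exp (-(t • H)) * Qᵀ) b‖
        ≤ (1 + ‖matCLM Q‖ * ‖matCLM Qᵀ‖) * ‖b‖)
    -- (iii) contraction factor
    (C : ℝ) (hC : C = Real.exp (-(T * lam1)) + 10 * Real.exp (-(4 * (k : ℝ) ^ 2 / (5 * T * ρ))))
    (hC1 : C < 1)
    (v0 : EuclideanSpace ℝ (Fin n))
    (hv0 : v0 = matCLM (NormedSpace.exp (-(T • A))) v0
      + (∫ s in (0 : ℝ)..T, matCLM (NormedSpace.exp (-((T - s) • A))) (f s)) - φ)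
    (α : ℕ → EuclideanSpace ℝ (Fin n))
    (hα : ∀ m : ℕ, α (m + 1) = matCLM (Q * NormedSpace.exp (-(T • H)) * Qᵀ) (α m)
      + (∫ s in (0 : ℝ)..T, matCLM (Q * NormedSpace.exp (-((T - s) • H)) * Qᵀ) (f s)) - φ) :
    ∀ m : ℕ, 1 ≤ m →
      ‖α m - v0‖ ≤ Real.exp (-(T * m * lam1)) * ‖α 0 - v0‖
        + 10 * Real.exp (-(4 * (k : ℝ) ^ 2 / (5 * T * ρ))) * m * C ^ (m - 1) * ‖α 0 - v0‖
        + (10 * Real.exp (-(4 * (k : ℝ) ^ 2 / (5 * T * ρ))) * (‖v0‖ + T * S)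
            + ε * (1 + ‖matCLM Q‖ * ‖matCLM Qᵀ‖) * S) * (1 - C ^ m) / (1 - C) := by
  intro m hm
  set δ := 10 * Real.exp (-(4 * (k : ℝ) ^ 2 / (5 * T * ρ))) with hδdef
  set κ := ‖matCLM Q‖ * ‖matCLM Qᵀ‖ with hκdef
  have hδ0 : 0 ≤ δ := by positivity
  have hκ0 : 0 ≤ κ := by positivity
  have hE0 : (0:ℝ) < Real.exp (-(T * lam1)) := Real.exp_pos _
  have hC0 : 0 < C := by rw [hC]; positivity
  have hCE : Real.exp (-(T * lam1)) ≤ C := by rw [hC]; linarith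
  have hCne1 : C ≠ 1 := ne_of_lt hC1
  have h1C : (0:ℝ) < 1 - C := by linarith
  -- bounds on S
  have hbdd : BddAbove ((fun s => ‖f s‖) '' Set.Icc (0:ℝ) T) :=
    (isCompact_Icc.image_of_continuousOn hf.norm).bddAbove
  have hfS : ∀ s ∈ Set.Icc (0:ℝ) T, ‖f s‖ ≤ S := fun s hs => hS ▸ le_csSup hbdd ⟨s, hs, rfl⟩
  have hS0 : 0 ≤ S := le_trans (norm_nonneg (f 0)) (hfS 0 ⟨le_refl 0, hT.le⟩)
  -- operator bounds
  have hAop : ∀ x : EuclideanSpace ℝ (Fin n),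
      ‖matCLM (NormedSpace.exp (-(T • A))) x‖ ≤ Real.exp (-(T * lam1)) * ‖x‖ :=
    fun x => exp_opBound A hA.isHermitian lam1 T hT.le hlam_min x
  have hTmem : T ∈ Set.Icc ε T := ⟨hεT.le, le_refl T⟩
  have hMop : ∀ x : EuclideanSpace ℝ (Fin n),
      ‖matCLM (Q * NormedSpace.exp (-(T • H)) * Qᵀ) x‖ ≤ C * ‖x‖ := by
    intro x
    have h1 := harn x T hTmem
    have h2 := hAop x
    have h3 : matCLM (Q * NormedSpace.exp (-(T • H)) * Qᵀ) x
        = matCLM (NormedSpace.exp (-(T • A))) x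
          - (matCLM (NormedSpace.exp (-(T • A))) x
              - matCLM (Q * NormedSpace.exp (-(T • H)) * Qᵀ) x) := by abel
    rw [h3]
    calc ‖_ - _‖ ≤ ‖matCLM (NormedSpace.exp (-(T • A))) x‖
          + ‖matCLM (NormedSpace.exp (-(T • A))) x
              - matCLM (Q * NormedSpace.exp (-(T • H)) * Qᵀ) x‖ := norm_sub_le _ _
      _ ≤ Real.exp (-(T * lam1)) * ‖x‖ + δ * ‖x‖ := add_le_add h2 h1
      _ = C * ‖x‖ := by rw [hC]; ring
  -- integrability
  have hcont1 : ContinuousOn (fun s => matCLM (NormedSpace.exp (-((T - s) • A))) (f s))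
      (Set.Icc (0:ℝ) T) :=
    ContinuousOn.clm_apply ((matCLM_cont.comp (exp_cont A T)).continuousOn) hf
  have hcont2 : ContinuousOn
      (fun s => matCLM (Q * NormedSpace.exp (-((T - s) • H)) * Qᵀ) (f s))
      (Set.Icc (0:ℝ) T) :=
    ContinuousOn.clm_apply ((matCLM_cont.comp
      ((continuous_const.matrix_mul (exp_cont H T)).matrix_mul continuous_const)).continuousOn) hf
  have hgi : IntervalIntegrable (fun s => matCLM (NormedSpace.exp (-((T - s) • A))) (f s))
      MeasureTheory.volume 0 T :=
    ContinuousOn.intervalIntegrable (by rwa [Set.uIcc_of_le hT.le])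
  have hhi : IntervalIntegrable
      (fun s => matCLM (Q * NormedSpace.exp (-((T - s) • H)) * Qᵀ) (f s))
      MeasureTheory.volume 0 T :=
    ContinuousOn.intervalIntegrable (by rwa [Set.uIcc_of_le hT.le])
  have hdi := hhi.sub hgi
  -- integral bound
  have hsub1 : Set.uIcc (0:ℝ) (T - ε) ⊆ Set.uIcc (0:ℝ) T := by
    rw [Set.uIcc_of_le (by linarith), Set.uIcc_of_le hT.le]
    exact Set.Icc_subset_Icc (le_refl _) (by linarith)
  have hsub2 : Set.uIcc (T - ε) T ⊆ Set.uIcc (0:ℝ) T := by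
    rw [Set.uIcc_of_le (by linarith), Set.uIcc_of_le hT.le]
    exact Set.Icc_subset_Icc (by linarith) (le_refl _)
  have hImain : ‖(∫ s in (0:ℝ)..T, matCLM (Q * NormedSpace.exp (-((T - s) • H)) * Qᵀ) (f s))
      - (∫ s in (0:ℝ)..T, matCLM (NormedSpace.exp (-((T - s) • A))) (f s))‖
      ≤ δ * (T * S) + ε * ((1 + κ) * S) := by
    rw [← intervalIntegral.integral_sub hhi hgi]
    rw [← intervalIntegral.integral_add_adjacent_intervals
      (hdi.mono_set hsub1) (hdi.mono_set hsub2)]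
    have hb1 : ‖∫ s in (0:ℝ)..(T - ε),
        (matCLM (Q * NormedSpace.exp (-((T - s) • H)) * Qᵀ) (f s)
          - matCLM (NormedSpace.exp (-((T - s) • A))) (f s))‖ ≤ (δ * S) * |T - ε - 0| := by
      apply intervalIntegral.norm_integral_le_of_norm_le_const
      intro x hx
      rw [Set.uIoc_of_le (by linarith : (0:ℝ) ≤ T - ε)] at hx
      rw [norm_sub_rev]
      calc ‖_‖ ≤ δ * ‖f x‖ := harn (f x) (T - x) ⟨by linarith [hx.2], by linarith [hx.1]⟩
        _ ≤ δ * S := mul_le_mul_of_nonneg_left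
            (hfS x ⟨hx.1.le, by linarith [hx.2]⟩) hδ0
    have hb2 : ‖∫ s in (T - ε)..T,
        (matCLM (Q * NormedSpace.exp (-((T - s) • H)) * Qᵀ) (f s)
          - matCLM (NormedSpace.exp (-((T - s) • A))) (f s))‖ ≤ ((1 + κ) * S) * |T - (T - ε)| := by
      apply intervalIntegral.norm_integral_le_of_norm_le_const
      intro x hx
      rw [Set.uIoc_of_le (by linarith : T - ε ≤ T)] at hx
      rw [norm_sub_rev]
      calc ‖_‖ ≤ (1 + κ) * ‖f x‖ := hcrude (f x) (T - x) ⟨by linarith [hx.2], by linarith [hx.1]⟩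
        _ ≤ (1 + κ) * S := mul_le_mul_of_nonneg_left
            (hfS x ⟨by linarith [hx.1], hx.2⟩) (by linarith)
    have habs1 : |T - ε - 0| = T - ε := by rw [sub_zero]; exact abs_of_nonneg (by linarith)
    have habs2 : |T - (T - ε)| = ε := by rw [show T - (T - ε) = ε from by ring]; exact abs_of_nonneg hε0.le
    rw [habs1] at hb1
    rw [habs2] at hb2
    calc ‖_ + _‖ ≤ (δ * S) * (T - ε) + ((1 + κ) * S) * ε := (norm_add_le _ _).trans (add_le_add hb1 hb2)
      _ ≤ δ * (T * S) + ε * ((1 + κ) * S) := by nlinarith [mul_nonneg (mul_nonneg hδ0 hS0) hε0.le]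
  -- the one-step recursion
  set D : ℝ := δ * ‖v0‖ + (δ * (T * S) + ε * ((1 + κ) * S)) with hD
  have hD0 : 0 ≤ D := by positivity
  have hrec : ∀ j : ℕ, ‖α (j + 1) - v0‖ ≤ C * ‖α j - v0‖ + D := by
    intro j
    have hkey0 : α (j + 1) - v0
        = (matCLM (Q * NormedSpace.exp (-(T • H)) * Qᵀ) (α j)
            + (∫ s in (0:ℝ)..T, matCLM (Q * NormedSpace.exp (-((T - s) • H)) * Qᵀ) (f s)) - φ)
          - (matCLM (NormedSpace.exp (-(T • A))) v0
            + (∫ s in (0:ℝ)..T, matCLM (NormedSpace.exp (-((T - s) • A))) (f s)) - φ) := by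
      rw [hα j]
      exact congrArg (fun z => _ - z) hv0
    have hkey : α (j + 1) - v0
        = matCLM (Q * NormedSpace.exp (-(T • H)) * Qᵀ) (α j - v0)
          + (matCLM (Q * NormedSpace.exp (-(T • H)) * Qᵀ) v0
              - matCLM (NormedSpace.exp (-(T • A))) v0)
          + ((∫ s in (0:ℝ)..T, matCLM (Q * NormedSpace.exp (-((T - s) • H)) * Qᵀ) (f s))
              - (∫ s in (0:ℝ)..T, matCLM (NormedSpace.exp (-((T - s) • A))) (f s))) := by
      rw [hkey0, map_sub]
      abel
    rw [hkey]
    have hn1 := hMop (α j - v0)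
    have hn2 : ‖matCLM (Q * NormedSpace.exp (-(T • H)) * Qᵀ) v0
        - matCLM (NormedSpace.exp (-(T • A))) v0‖ ≤ δ * ‖v0‖ := by
      rw [norm_sub_rev]; exact harn v0 T hTmem
    calc ‖_ + _ + _‖ ≤ ‖_‖ + ‖_‖ + ‖_‖ := norm_add₃_le
      _ ≤ C * ‖α j - v0‖ + D := by rw [hD]; linarith [hImain]
  -- iterate the recursion
  have hiter : ∀ j : ℕ, ‖α j - v0‖ ≤ C ^ j * ‖α 0 - v0‖ + D * ∑ i ∈ Finset.range j, C ^ i := by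
    intro j
    induction j with
    | zero => simp
    | succ j ih =>
      calc ‖α (j + 1) - v0‖ ≤ C * ‖α j - v0‖ + D := hrec j
        _ ≤ C * (C ^ j * ‖α 0 - v0‖ + D * ∑ i ∈ Finset.range j, C ^ i) + D := by
            have := mul_le_mul_of_nonneg_left ih hC0.le
            linarith
        _ = C ^ (j + 1) * ‖α 0 - v0‖ + D * ∑ i ∈ Finset.range (j + 1), C ^ i := by
            rw [geom_sum_succ]
            ring
  -- power comparison
  have hpow : ∀ j : ℕ, 1 ≤ j →
      C ^ j ≤ (Real.exp (-(T * lam1))) ^ j + δ * j * C ^ (j - 1) := by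
    intro j hj
    induction j with
    | zero => omega
    | succ j ih =>
      rcases Nat.eq_zero_or_pos j with rfl | hjpos
      · rw [hC]; norm_num
      · have hih := ih hjpos
        have hEC : (Real.exp (-(T * lam1))) ^ j ≤ C ^ j :=
          pow_le_pow_left₀ hE0.le hCE j
        have hCj : C ^ (j - 1) * C = C ^ j := by
          rw [← pow_succ]
          congr 1
          omega
        have h2 : C ^ (j + 1) = C ^ j * C := by rw [pow_succ]
        have h3 : C ^ j * C ≤ ((Real.exp (-(T * lam1))) ^ j + δ * j * C ^ (j - 1)) * C :=
          mul_le_mul_of_nonneg_right hih hC0.le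
        rw [h2]
        push_cast
        calc C ^ j * C ≤ ((Real.exp (-(T * lam1))) ^ j + δ * j * C ^ (j - 1)) * C := h3
          _ = (Real.exp (-(T * lam1))) ^ j * C + δ * j * (C ^ (j - 1) * C) := by ring
          _ = (Real.exp (-(T * lam1))) ^ j * C + δ * j * C ^ j := by rw [hCj]
          _ = (Real.exp (-(T * lam1))) ^ j * Real.exp (-(T * lam1))
              + δ * (Real.exp (-(T * lam1))) ^ j + δ * j * C ^ j := by rw [hC]; ring
          _ ≤ (Real.exp (-(T * lam1))) ^ (j + 1) + δ * C ^ j + δ * j * C ^ j := by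
              rw [pow_succ]
              have := mul_le_mul_of_nonneg_left hEC hδ0
              linarith
          _ = (Real.exp (-(T * lam1))) ^ (j + 1) + δ * ((j:ℝ) + 1) * C ^ (j + 1 - 1) := by
              simp only [Nat.add_sub_cancel]
              ring
  -- finish
  have hsum : ∑ i ∈ Finset.range m, C ^ i = (1 - C ^ m) / (1 - C) := by
    rw [geom_sum_eq hCne1 m, ← neg_sub 1 (C ^ m), ← neg_sub 1 C, neg_div_neg_eq]
  have hfin := hiter m
  rw [hsum] at hfin
  have hexp : (Real.exp (-(T * lam1))) ^ m = Real.exp (-(T * m * lam1)) := by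
    rw [← Real.exp_nat_mul]
    congr 1
    ring
  have he0 : (0:ℝ) ≤ ‖α 0 - v0‖ := norm_nonneg _
  have h1 : C ^ m * ‖α 0 - v0‖
      ≤ ((Real.exp (-(T * lam1))) ^ m + δ * m * C ^ (m - 1)) * ‖α 0 - v0‖ :=
    mul_le_mul_of_nonneg_right (hpow m hm) he0
  calc ‖α m - v0‖ ≤ C ^ m * ‖α 0 - v0‖ + D * ((1 - C ^ m) / (1 - C)) := hfin
    _ ≤ ((Real.exp (-(T * lam1))) ^ m + δ * m * C ^ (m - 1)) * ‖α 0 - v0‖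
        + D * ((1 - C ^ m) / (1 - C)) := by linarith
    _ = Real.exp (-(T * m * lam1)) * ‖α 0 - v0‖ + δ * m * C ^ (m - 1) * ‖α 0 - v0‖
        + (δ * (‖v0‖ + T * S) + ε * (1 + κ) * S) * (1 - C ^ m) / (1 - C) := by
      rw [← hexp, hD]
      ring
end
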